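/- Type soundness for the RPC calculus: if a term M has type τ at location a under type environment Γ (written Γ ⊢_a M : τ), and M evaluates at location a to value V (written M ⇓_a V), then V has type τ at location a under Γ. -/

import Mathlib

/-! Locations of the RPC calculus: client and server. -/
inductive Loc | c | s
deriving DecidableEq, Repr

/-! Types: base and location-annotated function types τ →^a τ'. -/
inductive Ty | base | arr (t : Ty) (a : Loc) (t' : Ty)
deriving DecidableEq, Repr

/-! Terms of λ_rpc in de Bruijn representation. -/
inductive Tm
| var (n : Nat)
| lam (a : Loc) (body : Tm)
| app (l m : Tm)
deriving DecidableEq, Repr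

/-- Values are variables and λ-abstractions. -/
def IsValue : Tm → Prop
| .var _ => True
| .lam _ _ => True
| .app _ _ => False

/-- de Bruijn lifting. -/
def lift (d : Nat) : Tm → Tm
| .var n => .var (if n < d then n else n + 1)
| .lam a m => .lam a (lift (d + 1) m)
| .app l m => .app (lift d l) (lift d m)

/-- Capture-avoiding substitution of `w` for de Bruijn index `k`. -/
def subst (k : Nat) (w : Tm) : Tm → Tm
| .var n => if n = k then w else .var (if n < k then n else n - 1)
| .lam a m => .lam a (subst (k + 1) (lift 0 w) m)
| .app l m => .app (subst k w l) (subst k w m)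

/-- Big-step semantics M ⇓_a V of λ_rpc. -/
inductive Eval : Loc → Tm → Tm → Prop
| value {a V} : IsValue V → Eval a V V
| beta {a b L M N W V} : Eval a L (.lam b N) → Eval a M W →
    Eval b (subst 0 W N) V → Eval a (.app L M) V

/-- The locative type system Γ ⊢_a M : τ. -/
inductive Typing : List Ty → Loc → Tm → Ty → Prop
| var {Γ a n τ} : Γ[n]? = some τ → Typing Γ a (.var n) τ
| lam {Γ a b M τ τ'} : Typing (τ :: Γ) b M τ' →
    Typing Γ a (.lam b M) (.arr τ b τ')
| app {Γ a L M τ τ'} : Typing Γ a L (.arr τ a τ') → Typing Γ a M τ →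
    Typing Γ a (.app L M) τ'
| req {Γ L M τ τ'} : Typing Γ .c L (.arr τ .s τ') → Typing Γ .c M τ →
    Typing Γ .c (.app L M) τ'
| call {Γ L M τ τ'} : Typing Γ .s L (.arr τ .c τ') → Typing Γ .s M τ →
    Typing Γ .s (.app L M) τ'

/-!
Induction on the evaluation derivation, as for the simply typed λ-calculus. The one new point is
locations: in `(Beta)` the body of `λ^b x.N` runs at `b` while the argument `W` was typed at `a`,
and the result `V` is typed at `b` while it is wanted at `a`. Both moves are possible because the
typing rules for values (`T-Var`, `T-Lam`) do not look at the current location, so a value keeps its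
type at every location.
-/

theorem List.getElem?_append_cons_shift {α : Type*} (Γ₁ Γ₂ : List α) (σ : α) (n : ℕ) :
    (Γ₁ ++ σ :: Γ₂)[if n < Γ₁.length then n else n + 1]? = (Γ₁ ++ Γ₂)[n]? := by
  split_ifs with hn
  · rw [List.getElem?_append_left hn, List.getElem?_append_left hn]
  · rw [List.getElem?_append_right (by omega), List.getElem?_append_right (by omega),
      Nat.sub_add_comm (by omega), List.getElem?_cons_succ]

theorem Eval.isValue {a : Loc} {M V : Tm} (h : Eval a M V) : IsValue V := by
  induction h with
  | value hv => exact hv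
  | beta _ _ _ _ _ ih => exact ih

namespace Typing

theorem relocate_of_isValue {Γ : List Ty} {a : Loc} {V : Tm} {τ : Ty} (hv : IsValue V)
    (h : Typing Γ a V τ) (b : Loc) : Typing Γ b V τ := by
  cases h with
  | var h => exact .var h
  | lam h => exact .lam h
  | app | req | call => exact hv.elim

theorem app_inv {Γ : List Ty} {a : Loc} {L M : Tm} {τ' : Ty} (h : Typing Γ a (.app L M) τ') :
    ∃ τ b, Typing Γ a L (.arr τ b τ') ∧ Typing Γ a M τ := by
  cases h with
  | app hL hM | req hL hM | call hL hM => exact ⟨_, _, hL, hM⟩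

end Typing

theorem Typing.weaken {Γ₁ Γ₂ : List Ty} {a : Loc} {M : Tm} {τ : Ty} (σ : Ty)
    (h : Typing (Γ₁ ++ Γ₂) a M τ) : Typing (Γ₁ ++ σ :: Γ₂) a (lift Γ₁.length M) τ := by
  generalize hΓ : Γ₁ ++ Γ₂ = Γ at h
  induction h generalizing Γ₁ with
  | var hn =>
    subst hΓ
    exact .var ((List.getElem?_append_cons_shift Γ₁ Γ₂ σ _).trans hn)
  | @lam _ _ _ _ τ _ _ ih => exact .lam (ih (Γ₁ := τ :: Γ₁) (by simp [hΓ]))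
  | app _ _ ih₁ ih₂ => exact .app (ih₁ hΓ) (ih₂ hΓ)
  | req _ _ ih₁ ih₂ => exact .req (ih₁ hΓ) (ih₂ hΓ)
  | call _ _ ih₁ ih₂ => exact .call (ih₁ hΓ) (ih₂ hΓ)

theorem Typing.substitution {Γ₁ Γ₂ : List Ty} {a : Loc} {M W : Tm} {τ σ : Ty}
    (h : Typing (Γ₁ ++ σ :: Γ₂) a M τ) (hW : ∀ b, Typing (Γ₁ ++ Γ₂) b W σ) :
    Typing (Γ₁ ++ Γ₂) a (subst Γ₁.length W M) τ := by
  generalize hΓ : Γ₁ ++ σ :: Γ₂ = Γ at h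
  induction h generalizing Γ₁ W with
  | @var _ a n _ hn =>
    subst hΓ
    rw [subst]
    by_cases hk : n = Γ₁.length
    · rw [if_pos hk]
      subst hk
      simp only [List.getElem?_append_right le_rfl, Nat.sub_self, List.getElem?_cons_zero,
        Option.some.injEq] at hn
      exact hn ▸ hW a
    · rw [if_neg hk]
      refine .var ?_
      rw [← List.getElem?_append_cons_shift Γ₁ Γ₂ σ, ← hn]
      congr 1
      split_ifs <;> omega
  | @lam _ _ _ _ τ _ _ ih =>
    exact .lam (ih (Γ₁ := τ :: Γ₁) (fun b => (hW b).weaken (Γ₁ := []) τ) (by simp [hΓ]))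
  | app _ _ ih₁ ih₂ => exact .app (ih₁ hW hΓ) (ih₂ hW hΓ)
  | req _ _ ih₁ ih₂ => exact .req (ih₁ hW hΓ) (ih₂ hW hΓ)
  | call _ _ ih₁ ih₂ => exact .call (ih₁ hW hΓ) (ih₂ hW hΓ)

/-- Type soundness for λ_rpc: typing is preserved by evaluation. -/
theorem rpc_type_soundness {Γ : List Ty} {a : Loc} {M V : Tm} {τ : Ty}
    (hty : Typing Γ a M τ) (hev : Eval a M V) : Typing Γ a V τ := by
  induction hev generalizing τ with
  | value _ => exact hty
  | @beta a _ _ _ _ _ _ _ hM hN ihL ihM ihN =>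
    obtain ⟨σ, _, hL, hArg⟩ := hty.app_inv
    cases ihL hL with
    | lam hBody =>
      have hW := (ihM hArg).relocate_of_isValue hM.isValue
      exact (ihN (hBody.substitution (Γ₁ := []) hW)).relocate_of_isValue hN.isValue a
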